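/- The string rewriting system on words over the alphabet {\delta, e_1, ..., e_{n-1}} with rules e_i \delta \to \delta e_i, e_i e_i \to \delta e_i, e_i e_{i+1} e_i \to e_i, e_i e_{i-1} e_i \to e_i, and e_i e_j \to e_j e_i for j < i - 1 is terminating. -/

import Mathlib

/-!
Termination by a monotone interpretation in `ℕ`: read `δ` as `x ↦ x + 1` and `e_i` as
`x ↦ 2x + (n - i)`, and a word as the composite of its letters. These maps are strictly
increasing, so it suffices that each rule strictly decreases the interpretation pointwise;
for the commutation rule this is because the additive constant of `e_i` decreases with `i`.
-/

/-- The alphabet `{δ, e_1, …, e_{n-1}}`: `none` is `δ` and `some i` is the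
generator `e_{i+1}` for `i : Fin (n-1)`. -/
abbrev TLLetter (n : ℕ) := Option (Fin (n - 1))

/-- The rewriting rules: `e_i δ → δ e_i`, `e_i e_i → δ e_i`,
`e_i e_{i±1} e_i → e_i`, and `e_i e_j → e_j e_i` for `j < i - 1`. -/
inductive TLRule (n : ℕ) : List (TLLetter n) → List (TLLetter n) → Prop
  | delta (i : Fin (n - 1)) : TLRule n [some i, none] [none, some i]
  | square (i : Fin (n - 1)) : TLRule n [some i, some i] [none, some i]
  | braid (i j : Fin (n - 1)) (h : (i : ℕ) = j + 1 ∨ (j : ℕ) = i + 1) :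
      TLRule n [some i, some j, some i] [some i]
  | comm (i j : Fin (n - 1)) (h : (j : ℕ) + 1 < i) :
      TLRule n [some i, some j] [some j, some i]

/-- One rewriting step: a rule applied inside an arbitrary context. -/
def TLStep (n : ℕ) (x y : List (TLLetter n)) : Prop :=
  ∃ u v a b, TLRule n a b ∧ x = u ++ a ++ v ∧ y = u ++ b ++ v

theorem List.foldr_append_lt_foldr_append {α β : Type*} [Preorder β] {f : α → β → β}
    (hf : ∀ c, StrictMono (f c)) {a b : List α} (hab : ∀ x, b.foldr f x < a.foldr f x)
    (u v : List α) (x : β) :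
    (u ++ b ++ v).foldr f x < (u ++ a ++ v).foldr f x := by
  simp only [List.foldr_append]
  exact List.foldr_strictMono hf u (hab _)

def tlWeight (n : ℕ) : TLLetter n → ℕ → ℕ
  | none, x => x + 1
  | some i, x => 2 * x + (n - i)

def tlInterp (n : ℕ) (w : List (TLLetter n)) : ℕ := w.foldr (tlWeight n) 0

theorem tlWeight_strictMono (n : ℕ) (c : TLLetter n) : StrictMono (tlWeight n c) := by
  intro x y hxy
  cases c <;> simp only [tlWeight] <;> omega

theorem TLRule.foldr_tlWeight_lt {n : ℕ} {a b : List (TLLetter n)} (h : TLRule n a b) (x : ℕ) :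
    b.foldr (tlWeight n) x < a.foldr (tlWeight n) x := by
  cases h <;> simp only [List.foldr, tlWeight] <;> omega

theorem TLStep.tlInterp_lt {n : ℕ} {x y : List (TLLetter n)} (h : TLStep n x y) :
    tlInterp n y < tlInterp n x := by
  obtain ⟨u, v, a, b, hrule, rfl, rfl⟩ := h
  exact List.foldr_append_lt_foldr_append (tlWeight_strictMono n) hrule.foldr_tlWeight_lt u v 0

/-- The rewriting system with rules `e_i δ → δ e_i`, `e_i e_i → δ e_i`,
`e_i e_{i±1} e_i → e_i`, `e_i e_j → e_j e_i` (`j < i-1`) is terminating: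
there is no infinite rewrite sequence. -/
theorem tl_rewriting_terminating (n : ℕ) :
    ∀ f : ℕ → List (TLLetter n), ¬ ∀ k : ℕ, TLStep n (f k) (f (k + 1)) := fun f hf =>
  not_strictAnti_of_wellFoundedLT (tlInterp n ∘ f)
    (strictAnti_nat_of_succ_lt fun k => (hf k).tlInterp_lt)
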